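/- For a field K, every leading principal minor of M°M is nonzero when M is invertible, where M° = Q_n⁻¹ Mᵀ Q_n over K(t). -/
import Mathlib

open Matrix

open Polynomial in
/-- Key lemma: if `V : Fin n → K[X]` is not identically zero, then the family of
identities `∑ c, X^c * V c * C ((V c).coeff m) = 0` (for all `m`) is impossible. -/
private lemma twisted_key {K : Type*} [Field K] {n : ℕ}
    (V : Fin n → Polynomial K) (c₀ : Fin n) (hc₀ : V c₀ ≠ 0)
    (hF : ∀ m : ℕ,
      ∑ c : Fin n, Polynomial.X ^ (c : ℕ) * V c * Polynomial.C ((V c).coeff m) = 0) :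
    False := by
  classical
  set L : Finset (Fin n) := Finset.univ.filter (fun c => V c ≠ 0) with hL
  have hLne : L.Nonempty := ⟨c₀, by simp [hL, hc₀]⟩
  set a : ℕ := (L.image fun c => (V c).natTrailingDegree).min' (hLne.image _) with ha
  have haLe : ∀ c ∈ L, a ≤ (V c).natTrailingDegree := fun c hc =>
    Finset.min'_le _ _ (Finset.mem_image_of_mem _ hc)
  have haMem : ∃ c ∈ L, (V c).natTrailingDegree = a := by
    have := (L.image fun c => (V c).natTrailingDegree).min'_mem (hLne.image _)
    rw [← ha] at this
    simpa [eq_comm] using Finset.mem_image.mp this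
  set A : Finset (Fin n) := L.filter (fun c => (V c).natTrailingDegree = a) with hA
  have hAne : A.Nonempty := by
    obtain ⟨c, hc, hc'⟩ := haMem
    exact ⟨c, by simp [hA, hc, hc']⟩
  set l₀ : Fin n := A.min' hAne with hl₀
  have hl₀A : l₀ ∈ A := A.min'_mem hAne
  have hl₀L : l₀ ∈ L := (Finset.mem_filter.mp hl₀A).1
  have hVl₀ : V l₀ ≠ 0 := (Finset.mem_filter.mp hl₀L).2
  have hntd : (V l₀).natTrailingDegree = a := (Finset.mem_filter.mp hl₀A).2
  -- take the coefficient at `(l₀ : ℕ) + a` of the identity for `m = a`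
  have h0 : (∑ c : Fin n,
      Polynomial.X ^ (c : ℕ) * V c * Polynomial.C ((V c).coeff a)).coeff ((l₀ : ℕ) + a) = 0 := by
    rw [hF a]; simp
  rw [Polynomial.finset_sum_coeff] at h0
  have hterm : ∀ c : Fin n,
      (Polynomial.X ^ (c : ℕ) * V c * Polynomial.C ((V c).coeff a)).coeff ((l₀ : ℕ) + a)
      = (if (c : ℕ) ≤ (l₀ : ℕ) + a then (V c).coeff ((l₀ : ℕ) + a - c) else 0)
          * (V c).coeff a := by
    intro c
    rw [Polynomial.coeff_mul_C, Polynomial.X_pow_mul, Polynomial.coeff_mul_X_pow']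
  rw [Finset.sum_congr rfl (fun c _ => hterm c)] at h0
  rw [Finset.sum_eq_single l₀] at h0
  · -- the remaining term is a nonzero square
    have h1 : (V l₀).coeff a ≠ 0 := by
      rw [← hntd]
      exact mt Polynomial.trailingCoeff_eq_zero.mp hVl₀
    rw [if_pos (Nat.le_add_right _ _), Nat.add_sub_cancel_left] at h0
    exact h1 (by
      rcases mul_eq_zero.mp h0 with h | h
      · exact h
      · exact h)
  · intro c _ hcne
    by_cases hVc : V c = 0
    · simp [hVc]
    by_cases hca : (V c).natTrailingDegree = a
    · -- then c ∈ A, so l₀ < c, hence the first factor is 0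
      have hcA : c ∈ A := by simp [hA, hL, hVc, hca]
      have hlt : (l₀ : ℕ) < (c : ℕ) := by
        have := A.min'_le c hcA
        rcases lt_or_eq_of_le this with h | h
        · exact h
        · exact absurd h.symm (by simpa using hcne)
      rcases le_or_gt (c : ℕ) ((l₀ : ℕ) + a) with hle | hgt
      · rw [if_pos hle]
        have : (l₀ : ℕ) + a - (c : ℕ) < (V c).natTrailingDegree := by
          rw [hca]; omega
        rw [Polynomial.coeff_eq_zero_of_lt_natTrailingDegree this, zero_mul]
      · rw [if_neg (not_le.mpr hgt), zero_mul]
    · -- then natTrailingDegree (V c) > a, so the second factor is 0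
      have hcL : c ∈ L := by simp [hL, hVc]
      have : a < (V c).natTrailingDegree := lt_of_le_of_ne (haLe c hcL) (Ne.symm hca)
      rw [Polynomial.coeff_eq_zero_of_lt_natTrailingDegree this, mul_zero]
  · intro h; exact absurd (Finset.mem_univ l₀) h



theorem twisted_gram_leading_minors_nonzero {K : Type*} [Field K] {n : ℕ}
    (M : Matrix (Fin n) (Fin n) K) (hM : IsUnit M) :
    let t : RatFunc K := RatFunc.X
    let Q : Matrix (Fin n) (Fin n) (RatFunc K) :=
      Matrix.diagonal (fun i => t ^ (i : ℕ))
    let Me : Matrix (Fin n) (Fin n) (RatFunc K) :=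
      M.map (algebraMap K (RatFunc K))
    let Mc : Matrix (Fin n) (Fin n) (RatFunc K) := Q⁻¹ * Meᵀ * Q
    ∀ k : ℕ, ∀ hk : k ≤ n,
      ((Mc * Me).submatrix (Fin.castLE hk) (Fin.castLE hk)).det ≠ 0 := by
  intro t Q Me Mc k hk
  classical
  have htpow : ∀ m : ℕ, (t : RatFunc K) ^ m ≠ 0 := fun m =>
    pow_ne_zero m RatFunc.X_ne_zero
  set G : Matrix (Fin k) (Fin k) (Polynomial K) :=
    Matrix.of (fun i j => ∑ c : Fin n,
      Polynomial.X ^ (c : ℕ) * Polynomial.C (M c (Fin.castLE hk i)) *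
        Polynomial.C (M c (Fin.castLE hk j))) with hGdef
  have hQinv : Q⁻¹ = Matrix.diagonal (fun i : Fin n => (t ^ (i : ℕ))⁻¹) := by
    apply Matrix.inv_eq_right_inv
    simp only [Q]
    rw [Matrix.diagonal_mul_diagonal]
    ext i j
    rcases eq_or_ne i j with rfl | h
    · simp [mul_inv_cancel₀ (htpow _)]
    · simp [Matrix.diagonal_apply_ne _ h, Matrix.one_apply_ne h]
  have hMc : ∀ a b : Fin n, Mc a b
      = (t ^ (a : ℕ))⁻¹ * (algebraMap K (RatFunc K) (M b a)) * t ^ (b : ℕ) := by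
    intro a b
    simp only [Mc, hQinv]
    rw [Matrix.mul_diagonal, Matrix.diagonal_mul]
    simp only [Q, Me, Matrix.transpose_apply, Matrix.map_apply]
  have hentry : (Mc * Me).submatrix (Fin.castLE hk) (Fin.castLE hk)
      = Matrix.diagonal (fun i : Fin k => (t ^ (i : ℕ))⁻¹) *
        (G.map (algebraMap (Polynomial K) (RatFunc K))) := by
    ext i j
    rw [Matrix.submatrix_apply, Matrix.diagonal_mul, Matrix.mul_apply, Matrix.map_apply]
    simp only [hGdef, Matrix.of_apply]
    rw [map_sum, Finset.mul_sum]
    refine Finset.sum_congr rfl fun c _ => ?_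
    rw [hMc]
    simp only [Me, Matrix.map_apply, Fin.coe_castLE]
    rw [_root_.map_mul, _root_.map_mul, map_pow, RatFunc.algebraMap_X,
      RatFunc.algebraMap_C, RatFunc.algebraMap_C, RatFunc.algebraMap_eq_C]
    ring
  have hmapdet : (G.map (algebraMap (Polynomial K) (RatFunc K))).det
      = algebraMap (Polynomial K) (RatFunc K) G.det := by
    rw [← RingHom.mapMatrix_apply, ← RingHom.map_det]
  rw [hentry, Matrix.det_mul, Matrix.det_diagonal, hmapdet]
  have h1 : (∏ i : Fin k, (t ^ (i : ℕ))⁻¹) ≠ 0 :=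
    Finset.prod_ne_zero_iff.mpr fun i _ => inv_ne_zero (htpow i)
  intro hcontra
  rcases mul_eq_zero.mp hcontra with h | h
  · exact h1 h
  have hGdet : G.det = 0 := by
    apply RatFunc.algebraMap_injective K
    simpa using h
  obtain ⟨x, hx0, hGx⟩ := Matrix.exists_mulVec_eq_zero_iff.mpr hGdet
  set V : Fin n → Polynomial K :=
    fun c => ∑ j : Fin k, Polynomial.C (M c (Fin.castLE hk j)) * x j with hV
  have hrel : ∀ i : Fin k, ∑ c : Fin n,
      Polynomial.X ^ (c : ℕ) * Polynomial.C (M c (Fin.castLE hk i)) * V c = 0 := by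
    intro i
    have h2 := congrFun hGx i
    simp only [Matrix.mulVec, dotProduct, hGdef, Matrix.of_apply, Pi.zero_apply] at h2
    rw [← h2]
    simp only [hV, Finset.mul_sum, Finset.sum_mul]
    rw [Finset.sum_comm]
    refine Finset.sum_congr rfl fun c _ => Finset.sum_congr rfl fun j _ => ?_
    ring
  have hVne : ∃ c, V c ≠ 0 := by
    by_contra hall
    push_neg at hall
    apply hx0
    funext i
    have hNM : M⁻¹ * M = 1 := Matrix.nonsing_inv_mul M ((Matrix.isUnit_iff_isUnit_det M).mp hM)
    have h3 : ∑ c : Fin n, Polynomial.C (M⁻¹ (Fin.castLE hk i) c) * V c = 0 := by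
      simp [hall]
    have h4 : ∑ c : Fin n, Polynomial.C (M⁻¹ (Fin.castLE hk i) c) * V c
        = ∑ j : Fin k, Polynomial.C ((M⁻¹ * M) (Fin.castLE hk i) (Fin.castLE hk j)) * x j := by
      simp only [hV, Finset.mul_sum, Matrix.mul_apply, map_sum, Finset.sum_mul]
      rw [Finset.sum_comm]
      refine Finset.sum_congr rfl fun j _ => Finset.sum_congr rfl fun c _ => ?_
      rw [_root_.map_mul]
      ring
    rw [h4, hNM] at h3
    have h5 : ∑ j : Fin k, Polynomial.C ((1 : Matrix (Fin n) (Fin n) K)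
        (Fin.castLE hk i) (Fin.castLE hk j)) * x j = x i := by
      rw [Finset.sum_eq_single i]
      · simp [Matrix.one_apply]
      · intro j _ hji
        have : Fin.castLE hk i ≠ Fin.castLE hk j :=
          fun hc => hji.symm ((Fin.castLE_injective hk) hc)
        simp [Matrix.one_apply_ne this]
      · intro hi; exact absurd (Finset.mem_univ i) hi
    rw [h5] at h3
    simpa using h3
  obtain ⟨c₀, hc₀⟩ := hVne
  have hcoeffV : ∀ (c : Fin n) (m : ℕ),
      (V c).coeff m = ∑ j : Fin k, M c (Fin.castLE hk j) * (x j).coeff m := by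
    intro c m
    simp [hV, Polynomial.finset_sum_coeff, Polynomial.coeff_C_mul]
  have hFc : ∀ m : ℕ,
      ∑ c : Fin n, Polynomial.X ^ (c : ℕ) * V c * Polynomial.C ((V c).coeff m) = 0 := by
    intro m
    have step : ∑ c : Fin n, Polynomial.X ^ (c : ℕ) * V c * Polynomial.C ((V c).coeff m)
        = ∑ j : Fin k, (∑ c : Fin n, Polynomial.X ^ (c : ℕ) *
            Polynomial.C (M c (Fin.castLE hk j)) * V c) * Polynomial.C ((x j).coeff m) := by
      simp only [hcoeffV, map_sum, Finset.mul_sum, Finset.sum_mul]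
      rw [Finset.sum_comm]
      refine Finset.sum_congr rfl fun c _ => Finset.sum_congr rfl fun j _ => ?_
      rw [_root_.map_mul]
      ring
    rw [step]
    simp only [hrel, zero_mul, Finset.sum_const_zero]
  exact twisted_key V c₀ hc₀ hFc
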